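/- Let μ be any Möbius function for 𝒢, let ∅ denote the graph with no vertices, and let G be a finite simple graph. Then μ(∅,G) = 1 if |G| = 0, μ(∅,G) = −1 if |G| = 1, and μ(∅,G) = 0 if |G| > 1. -/

import Mathlib

open SimpleGraph

/-- A finite simple graph, encoded by its number of vertices together with a
simple graph structure on `Fin n`. -/
def FinGraph : Type := Σ n : ℕ, SimpleGraph (Fin n)

namespace FinGraph

/-- The number of vertices of a graph. -/
def order (G : FinGraph) : ℕ := G.1

/-- Induced containment `H ⊴ G`: there is an injection of the vertices of `H`
into the vertices of `G` which preserves and reflects adjacency (equivalently,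
`H` is isomorphic to an induced subgraph of `G`). -/
def Contains (H G : FinGraph) : Prop :=
  ∃ f : Fin H.1 ↪ Fin G.1, ∀ a b : Fin H.1, G.2.Adj (f a) (f b) ↔ H.2.Adj a b

/-- Isomorphism of finite graphs. -/
def Iso (H G : FinGraph) : Prop := Nonempty (H.2 ≃g G.2)

/-- Package a simple graph on an arbitrary finite vertex type as a `FinGraph`. -/
noncomputable def of {V : Type} [Fintype V] (G : SimpleGraph V) : FinGraph :=
  ⟨Fintype.card V, G.comap ⇑(Fintype.equivFin V).symm⟩

end FinGraph

/-- `T` is a transversal of the interval `[H,G]`: every member lies in `[H,G]`,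
distinct members are non-isomorphic, and every graph in `[H,G]` is isomorphic to
a member of `T`. -/
def IsTransversal (H G : FinGraph) (T : Finset FinGraph) : Prop :=
  (∀ X ∈ T, H.Contains X ∧ X.Contains G) ∧
  (∀ X ∈ T, ∀ Y ∈ T, X ≠ Y → ¬ X.Iso Y) ∧
  (∀ X : FinGraph, H.Contains X → X.Contains G → ∃ Y ∈ T, X.Iso Y)

/-- `mu` is a Möbius function for the poset `𝒢` of all finite simple graphs up to
isomorphism, ordered by induced containment: it is isomorphism invariant, vanishes
on non-comparable pairs, and for every `H ⊴ G` the sum of `mu H ·` over any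
transversal of `[H,G]` is `1` if `H ≅ G` and `0` otherwise. -/
def IsMobius (mu : FinGraph → FinGraph → ℤ) : Prop :=
  (∀ H H' G G' : FinGraph, H.Iso H' → G.Iso G' → mu H G = mu H' G') ∧
  (∀ H G : FinGraph, ¬ H.Contains G → mu H G = 0) ∧
  (∀ H G : FinGraph, H.Contains G → ∀ T : Finset FinGraph, IsTransversal H G T →
    (H.Iso G → ∑ X ∈ T, mu H X = 1) ∧ (¬ H.Iso G → ∑ X ∈ T, mu H X = 0))

/-!
The function `n ↦ [n = 0] - [n = 1]` of the order satisfies the defining recursion of `μ(∅, ·)`: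
a transversal of `[∅, G]` contains exactly one graph with no vertex and, when `G` is nonempty,
exactly one with one vertex, because on at most one vertex the only graph is the edgeless one.
By strong induction on `|G|`, `μ(∅, ·)` agrees with this function on every member of a
transversal of `[∅, G]` except the representative of `G`, so the recursion forces agreement there
as well.
-/

namespace FinGraph

variable {X Y Z : FinGraph}

lemma Iso.refl (X : FinGraph) : X.Iso X := ⟨RelIso.refl _⟩

lemma Iso.symm (h : X.Iso Y) : Y.Iso X := ⟨h.some.symm⟩

lemma Iso.trans (h : X.Iso Y) (h' : Y.Iso Z) : X.Iso Z := ⟨h.some.trans h'.some⟩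

lemma Iso.order_eq (h : X.Iso Y) : X.order = Y.order := by
  simpa [order] using Fintype.card_congr h.some.toEquiv

lemma Iso.contains (h : X.Iso Y) : X.Contains Y :=
  ⟨h.some.toEquiv.toEmbedding, fun _ _ => h.some.map_rel_iff⟩

lemma Contains.refl (X : FinGraph) : X.Contains X :=
  ⟨Function.Embedding.refl _, fun _ _ => Iff.rfl⟩

lemma Contains.trans (h : X.Contains Y) (h' : Y.Contains Z) : X.Contains Z := by
  obtain ⟨f, hf⟩ := h
  obtain ⟨g, hg⟩ := h'
  exact ⟨f.trans g, fun a b => (hg (f a) (f b)).trans (hf a b)⟩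

lemma Contains.order_le (h : X.Contains Y) : X.order ≤ Y.order := by
  simpa [order] using Fintype.card_le_of_embedding h.choose

lemma Contains.iso_of_order_eq (h : X.Contains Y) (he : X.order = Y.order) : X.Iso Y := by
  obtain ⟨f, hf⟩ := h
  have hbij : Function.Bijective f :=
    (Fintype.bijective_iff_injective_and_card f).2 ⟨f.injective, by simpa [order] using he⟩
  exact ⟨⟨Equiv.ofBijective f hbij, fun {a b} => hf a b⟩⟩

lemma contains_of_order_le_one (hX : X.order ≤ 1) (h : X.order ≤ Y.order) : X.Contains Y := by
  have : Subsingleton (Fin X.1) := Fin.subsingleton_iff_le_one.2 hX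
  refine ⟨Fin.castLEEmb h, fun a b => ?_⟩
  obtain rfl := Subsingleton.elim a b
  simp

lemma iso_of_order_eq_of_order_le_one (h : X.order = Y.order) (hX : X.order ≤ 1) : X.Iso Y :=
  (contains_of_order_le_one hX h.le).iso_of_order_eq h

def isoSetoid : Setoid FinGraph := ⟨Iso, ⟨Iso.refl, Iso.symm, Iso.trans⟩⟩

def nullGraph : FinGraph := ⟨0, ⊥⟩

lemma nullGraph_contains (G : FinGraph) : nullGraph.Contains G :=
  contains_of_order_le_one zero_le_one (Nat.zero_le G.order)

lemma nullGraph_iso_iff {G : FinGraph} : nullGraph.Iso G ↔ G.order = 0 :=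
  ⟨fun h => h.order_eq.symm, fun h => (nullGraph_contains G).iso_of_order_eq h.symm⟩

end FinGraph

open FinGraph Finset

lemma exists_isTransversal (H G : FinGraph) : ∃ T : Finset FinGraph, IsTransversal H G T := by
  classical
  let interval := {X : FinGraph | H.Contains X ∧ X.Contains G}
  have hfin : interval.Finite := by
    refine (Set.finite_range fun p : Σ k : Fin (G.order + 1), SimpleGraph (Fin k) =>
      (⟨p.1, p.2⟩ : FinGraph)).subset fun X hX => ?_
    exact ⟨⟨⟨X.1, Nat.lt_succ_of_le hX.2.order_le⟩, X.2⟩, rfl⟩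
  refine ⟨(hfin.toFinset.image (Quotient.mk isoSetoid)).image Quotient.out, ?_, ?_, ?_⟩
  · simp only [mem_image, Set.Finite.mem_toFinset]
    rintro _ ⟨_, ⟨X, hX, rfl⟩, rfl⟩
    have hiso : (Quotient.mk isoSetoid X).out.Iso X := Quotient.mk_out (s := isoSetoid) X
    exact ⟨hX.1.trans hiso.symm.contains, hiso.contains.trans hX.2⟩
  · simp only [mem_image]
    rintro _ ⟨c, -, rfl⟩ _ ⟨c', -, rfl⟩ hne hiso
    exact hne (congrArg Quotient.out (Quotient.out_equiv_out.1 hiso))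
  · intro X hHX hXG
    refine ⟨_, mem_image_of_mem _ (mem_image_of_mem _ (hfin.mem_toFinset.2 ⟨hHX, hXG⟩)), ?_⟩
    exact (Quotient.mk_out (s := isoSetoid) X).symm

namespace IsTransversal

variable {H G : FinGraph} {T : Finset FinGraph}

lemma eq_of_iso (hT : IsTransversal H G T) {X Y : FinGraph} (hX : X ∈ T) (hY : Y ∈ T)
    (h : X.Iso Y) : X = Y :=
  by_contra fun hne => hT.2.1 X hX Y hY hne h

lemma order_le (hT : IsTransversal H G T) {X : FinGraph} (hX : X ∈ T) : X.order ≤ G.order :=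
  (hT.1 X hX).2.order_le

lemma card_filter_order_eq (hT : IsTransversal nullGraph G T) {k : ℕ} (hk : k ≤ 1) :
    #(T.filter (·.order = k)) = if k ≤ G.order then 1 else 0 := by
  split_ifs with hkG
  · obtain ⟨Y, hY, hiso⟩ := hT.2.2 ⟨k, ⊥⟩ (nullGraph_contains _) (contains_of_order_le_one hk hkG)
    refine card_eq_one.2 ⟨Y, eq_singleton_iff_unique_mem.2 ⟨mem_filter.2 ⟨hY, ?_⟩, ?_⟩⟩
    · exact hiso.order_eq.symm
    · intro X hX
      obtain ⟨hXT, rfl⟩ := mem_filter.1 hX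
      exact hT.eq_of_iso hXT hY (iso_of_order_eq_of_order_le_one hiso.order_eq hk)
  · refine card_eq_zero.2 (filter_eq_empty_iff.2 fun X hX hXk => hkG ?_)
    exact hXk ▸ hT.order_le hX

end IsTransversal

def nullMobius (n : ℕ) : ℤ := if n = 0 then 1 else if n = 1 then -1 else 0

lemma IsTransversal.sum_nullMobius {G : FinGraph} {T : Finset FinGraph}
    (hT : IsTransversal nullGraph G T) :
    ∑ X ∈ T, nullMobius X.order = if G.order = 0 then 1 else 0 := by
  calc ∑ X ∈ T, nullMobius X.order
      = ∑ X ∈ T, ((if X.order = 0 then 1 else 0) - (if X.order = 1 then 1 else 0)) :=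
        sum_congr rfl fun X _ => by unfold nullMobius; split_ifs <;> omega
    _ = #(T.filter (·.order = 0)) - #(T.filter (·.order = 1)) := by
        rw [sum_sub_distrib, sum_boole, sum_boole]
    _ = if G.order = 0 then 1 else 0 := by
        rw [hT.card_filter_order_eq zero_le_one, hT.card_filter_order_eq le_rfl]
        split_ifs <;> omega

namespace IsMobius

variable {mu : FinGraph → FinGraph → ℤ}

open Classical in
lemma sum_transversal (hmu : IsMobius mu) {H G : FinGraph} (hHG : H.Contains G)
    {T : Finset FinGraph} (hT : IsTransversal H G T) :
    ∑ X ∈ T, mu H X = if H.Iso G then 1 else 0 := by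
  split_ifs with h
  exacts [(hmu.2.2 H G hHG T hT).1 h, (hmu.2.2 H G hHG T hT).2 h]

theorem apply_nullGraph (hmu : IsMobius mu) (G : FinGraph) :
    mu nullGraph G = nullMobius G.order := by
  induction hn : G.order using Nat.strong_induction_on generalizing G with
  | _ n ih =>
  classical
  obtain ⟨T, hT⟩ := exists_isTransversal nullGraph G
  obtain ⟨Y, hY, hGY⟩ := hT.2.2 G (nullGraph_contains G) (Contains.refl G)
  have hsmaller : ∀ X ∈ T.erase Y, mu nullGraph X = nullMobius X.order := by
    intro X hX
    obtain ⟨hXY, hXT⟩ := mem_erase.1 hX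
    refine ih X.order (lt_of_le_of_ne (hn ▸ hT.order_le hXT) fun hXn => hXY ?_) X rfl
    refine hT.eq_of_iso hXT hY (((hT.1 X hXT).2.iso_of_order_eq ?_).trans hGY)
    rw [hXn, hn]
  have hsum : ∑ X ∈ T, mu nullGraph X = ∑ X ∈ T, nullMobius X.order := by
    rw [hmu.sum_transversal (nullGraph_contains G) hT, hT.sum_nullMobius]
    simp only [nullGraph_iso_iff]
  rw [← add_sum_erase T _ hY, ← add_sum_erase T _ hY, sum_congr rfl hsmaller] at hsum
  calc mu nullGraph G = mu nullGraph Y := hmu.1 _ _ _ _ (Iso.refl _) hGY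
    _ = nullMobius Y.order := add_right_cancel hsum
    _ = nullMobius n := by rw [← hGY.order_eq, hn]

end IsMobius

/-- For the null graph `∅` (no vertices): `μ(∅,G) = 1` if `|G| = 0`,
`μ(∅,G) = -1` if `|G| = 1`, and `μ(∅,G) = 0` if `|G| > 1`. -/
theorem mobius_nullGraph (mu : FinGraph → FinGraph → ℤ) (hmu : IsMobius mu)
    (G : FinGraph) :
    (G.order = 0 → mu ⟨0, (⊥ : SimpleGraph (Fin 0))⟩ G = 1) ∧
    (G.order = 1 → mu ⟨0, (⊥ : SimpleGraph (Fin 0))⟩ G = -1) ∧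
    (1 < G.order → mu ⟨0, (⊥ : SimpleGraph (Fin 0))⟩ G = 0) := by
  have h : mu ⟨0, ⊥⟩ G = nullMobius G.order := hmu.apply_nullGraph G
  refine ⟨fun h0 => ?_, fun h1 => ?_, fun h2 => ?_⟩ <;> rw [h, nullMobius]
  · rw [if_pos h0]
  · rw [if_neg (by omega), if_pos h1]
  · rw [if_neg (by omega), if_neg (by omega)]
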